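/- arXiv:0712.0338 — 6 statements merged into one kernel-verified Lean document; each statement's English description precedes it below -/
import Mathlib

section
/- For all x, y ∈ M: y ∈ cl(I⁺(x)) if and only if I⁺(y) ⊆ I⁺(x). In other words, (x,y) ∈ D⁺_f exactly when the chronological future of y is contained in the chronological future of x. -/
/-
If `y` is a limit of points of `I⁺(x)` and `z ∈ I⁺(y)`, then `I⁻(z)` is an open neighbourhood
of `y` (as `I` is open), so it meets `I⁺(x)`, and transitivity gives `z ∈ I⁺(x)`. Conversely,
`y ∈ cl(I⁺(y)) ⊆ cl(I⁺(x))`.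
-/

open Set Topology

/-- The chronological future of `x`: `I⁺(x) = {y | (x,y) ∈ I}`. -/
def chronFuture {M : Type*} (I : Set (M × M)) (x : M) : Set M := {y | (x, y) ∈ I}

/-- The chronological past of `y`: `I⁻(y) = {x | (x,y) ∈ I}`. -/
def chronPast {M : Type*} (I : Set (M × M)) (y : M) : Set M := {x | (x, y) ∈ I}

/-- `D⁺_f = {(x,y) : y ∈ cl(I⁺(x))}`. -/
def Dfut {M : Type*} [TopologicalSpace M] (I : Set (M × M)) : Set (M × M) :=
  {p | p.2 ∈ closure (chronFuture I p.1)}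

/-- `D⁺_p = {(x,y) : x ∈ cl(I⁻(y))}`. -/
def Dpast {M : Type*} [TopologicalSpace M] (I : Set (M × M)) : Set (M × M) :=
  {p | p.1 ∈ closure (chronPast I p.2)}

/-- `D⁺ = D⁺_f ∩ D⁺_p`. -/
def Dplus {M : Type*} [TopologicalSpace M] (I : Set (M × M)) : Set (M × M) :=
  Dfut I ∩ Dpast I

section

variable {M : Type*} [TopologicalSpace M] {I : Set (M × M)}

theorem IsOpen.chronPast (hI : IsOpen I) (z : M) : IsOpen (chronPast I z) :=
  hI.preimage (Continuous.prodMk_left z)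

theorem chronFuture_subset_of_mem_closure (hI : IsOpen I)
    (htrans : ∀ x y z : M, (x, y) ∈ I → (y, z) ∈ I → (x, z) ∈ I) {x y : M}
    (hy : y ∈ closure (chronFuture I x)) : chronFuture I y ⊆ chronFuture I x := by
  intro z hyz
  obtain ⟨w, hwz, hxw⟩ := mem_closure_iff.mp hy (chronPast I z) (hI.chronPast z) hyz
  exact htrans x w z hxw hwz

end

theorem dfut_iff_future_subset_general {M : Type*} [TopologicalSpace M] (I : Set (M × M))
    (hIopen : IsOpen I)
    (hItrans : ∀ x y z : M, (x, y) ∈ I → (y, z) ∈ I → (x, z) ∈ I)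
    (hselfF : ∀ x : M, x ∈ closure (chronFuture I x)) :
    ∀ x y : M, (x, y) ∈ Dfut I ↔ chronFuture I y ⊆ chronFuture I x := fun _ y =>
  ⟨chronFuture_subset_of_mem_closure hIopen hItrans,
    fun hsub => closure_mono hsub (hselfF y)⟩

/-- `(x,y) ∈ D⁺_f` iff `I⁺(y) ⊆ I⁺(x)`. -/
theorem dfut_iff_future_subset {M : Type*} [TopologicalSpace M] (I : Set (M × M))
    (hIopen : IsOpen I)
    (hItrans : ∀ x y z : M, (x, y) ∈ I → (y, z) ∈ I → (x, z) ∈ I)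
    (hselfF : ∀ x : M, x ∈ closure (chronFuture I x))
    (hselfP : ∀ x : M, x ∈ closure (chronPast I x)) :
    ∀ x y : M, (x, y) ∈ Dfut I ↔ chronFuture I y ⊆ chronFuture I x :=
  dfut_iff_future_subset_general I hIopen hItrans hselfF
end

section
/- Assume additionally that every chronology violation lies on a nontrivial loop: if (x,x) ∈ I then there exists y ≠ x with (x,y) ∈ I and (y,x) ∈ I (this holds for the chronological relation of any spacetime, since a closed timelike curve contains more than one point). Then the following are equivalent: (1) for all x, y ∈ M, if I⁺(x) = I⁺(y) and I⁻(x) = I⁻(y) then x = y (weak distinction); (2) the map x ↦ I⁺(x) ∪ I⁻(x) from M to subsets of M is injective. -/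
open Set Topology

/-!
Weak distinction forces `I` to be irreflexive: a chronology violation at `x` lies on a loop
through some `y ≠ x`, and by transitivity `x` and `y` then have the same future and past.
For an irreflexive transitive `I`, a point `z ∈ I⁺(a) ∩ I⁻(b)` would give `a ≪ b`, so `b` would
lie in `I⁺(a) ∪ I⁻(a) = I⁺(b) ∪ I⁻(b)`, i.e. `b ≪ b`. Hence equal unions force
`I⁺(a) ⊆ I⁺(b)` and `I⁻(a) ⊆ I⁻(b)`, and by symmetry equality.
-/

section

variable {M : Type*} {I : Set (M × M)}
  (hItrans : ∀ x y z : M, (x, y) ∈ I → (y, z) ∈ I → (x, z) ∈ I)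
include hItrans

lemma chronFuture_eq_of_mem_of_mem {x y : M} (hxy : (x, y) ∈ I) (hyx : (y, x) ∈ I) :
    chronFuture I x = chronFuture I y :=
  Set.ext fun _ => ⟨hItrans y x _ hyx, hItrans x y _ hxy⟩

lemma chronPast_eq_of_mem_of_mem {x y : M} (hxy : (x, y) ∈ I) (hyx : (y, x) ∈ I) :
    chronPast I x = chronPast I y :=
  Set.ext fun _ => ⟨(hItrans _ x y · hxy), (hItrans _ y x · hyx)⟩

lemma self_notMem_of_weakly_distinguishing
    (hLoop : ∀ x : M, (x, x) ∈ I → ∃ y : M, y ≠ x ∧ (x, y) ∈ I ∧ (y, x) ∈ I)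
    (hwd : ∀ x y : M, chronFuture I x = chronFuture I y → chronPast I x = chronPast I y → x = y)
    (x : M) : (x, x) ∉ I := fun hxx => by
  obtain ⟨y, hyx, hxy, hyx'⟩ := hLoop x hxx
  exact hyx (hwd y x (chronFuture_eq_of_mem_of_mem hItrans hyx' hxy)
    (chronPast_eq_of_mem_of_mem hItrans hyx' hxy))

variable (hirr : ∀ x : M, (x, x) ∉ I) {a b : M}
  (hab : chronFuture I a ∪ chronPast I a = chronFuture I b ∪ chronPast I b)
include hirr hab

lemma chronFuture_subset_of_union_eq : chronFuture I a ⊆ chronFuture I b := by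
  intro z hz
  rcases hab.subset (mem_union_left _ hz) with hbz | hzb
  · exact hbz
  · obtain hbb | hbb := hab.subset (mem_union_left _ (hItrans a z b hz hzb)) <;>
      exact absurd hbb (hirr b)

lemma chronPast_subset_of_union_eq : chronPast I a ⊆ chronPast I b := by
  intro z hz
  rcases hab.subset (mem_union_right _ hz) with hbz | hzb
  · obtain hbb | hbb := hab.subset (mem_union_right _ (hItrans b z a hbz hz)) <;>
      exact absurd hbb (hirr b)
  · exact hzb

end

theorem weakly_dist_iff_union_injective_general {M : Type*} (I : Set (M × M))
    (hItrans : ∀ x y z : M, (x, y) ∈ I → (y, z) ∈ I → (x, z) ∈ I)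
    (hLoop : ∀ x : M, (x, x) ∈ I → ∃ y : M, y ≠ x ∧ (x, y) ∈ I ∧ (y, x) ∈ I) :
    (∀ x y : M, chronFuture I x = chronFuture I y → chronPast I x = chronPast I y → x = y) ↔
    Function.Injective (fun x : M => chronFuture I x ∪ chronPast I x) := by
  refine ⟨fun hwd x y hxy => ?_, fun hinj x y hF hP => hinj (by simp only [hF, hP])⟩
  have hirr := self_notMem_of_weakly_distinguishing hItrans hLoop hwd
  exact hwd x y
    ((chronFuture_subset_of_union_eq hItrans hirr hxy).antisymm
      (chronFuture_subset_of_union_eq hItrans hirr hxy.symm))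
    ((chronPast_subset_of_union_eq hItrans hirr hxy).antisymm
      (chronPast_subset_of_union_eq hItrans hirr hxy.symm))

/-- assuming every chronology violation lies on a nontrivial loop,
weak distinction is equivalent to injectivity of `x ↦ I⁺(x) ∪ I⁻(x)`. -/
theorem weakly_dist_iff_union_injective {M : Type*} [TopologicalSpace M] (I : Set (M × M))
    (hIopen : IsOpen I)
    (hItrans : ∀ x y z : M, (x, y) ∈ I → (y, z) ∈ I → (x, z) ∈ I)
    (hselfF : ∀ x : M, x ∈ closure (chronFuture I x))
    (hselfP : ∀ x : M, x ∈ closure (chronPast I x))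
    (hLoop : ∀ x : M, (x, x) ∈ I → ∃ y : M, y ≠ x ∧ (x, y) ∈ I ∧ (y, x) ∈ I) :
    (∀ x y : M, chronFuture I x = chronFuture I y → chronPast I x = chronPast I y → x = y) ↔
    Function.Injective (fun x : M => chronFuture I x ∪ chronPast I x) :=
  weakly_dist_iff_union_injective_general I hItrans hLoop
end

section
/- I is a left D⁺_p-ideal and a right D⁺_f-ideal: I ⊆ D⁺_p, and if (x,y) ∈ I and (y,z) ∈ D⁺_p then (x,z) ∈ I; likewise I ⊆ D⁺_f, and if (x,y) ∈ D⁺_f and (y,z) ∈ I then (x,z) ∈ I. Consequently I ⊆ D⁺ and both compositions with D⁺ remain in I. -/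
/-
Since `I⁺(x)` and `I⁻(z)` are open, a point of `cl(I⁻(z))` lying in `I⁺(x)` (or a point of
`cl(I⁺(x))` lying in `I⁻(z)`) yields some `w ∈ I⁺(x) ∩ I⁻(z)`, and transitivity gives `(x, z) ∈ I`.
-/

open Set Topology

section Chronology

variable {M : Type*} [TopologicalSpace M] {I : Set (M × M)}

theorem isOpen_chronFuture (hI : IsOpen I) (x : M) : IsOpen (chronFuture I x) :=
  hI.preimage (Continuous.prodMk_right x)

theorem isOpen_chronPast (hI : IsOpen I) (y : M) : IsOpen (chronPast I y) :=
  hI.preimage (Continuous.prodMk_left y)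

theorem subset_Dpast : I ⊆ Dpast I := fun _ hp => subset_closure hp

theorem subset_Dfut : I ⊆ Dfut I := fun _ hp => subset_closure hp

theorem subset_Dplus : I ⊆ Dplus I := fun _ hp => ⟨subset_Dfut hp, subset_Dpast hp⟩

variable (hI : IsOpen I) (htrans : ∀ x y z : M, (x, y) ∈ I → (y, z) ∈ I → (x, z) ∈ I)
include hI htrans

theorem mem_of_mem_of_mem_Dpast {x y z : M} (hxy : (x, y) ∈ I) (hyz : (y, z) ∈ Dpast I) :
    (x, z) ∈ I := by
  obtain ⟨w, hxw, hwz⟩ := mem_closure_iff.mp hyz _ (isOpen_chronFuture hI x) hxy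
  exact htrans x w z hxw hwz

theorem mem_of_mem_Dfut_of_mem {x y z : M} (hxy : (x, y) ∈ Dfut I) (hyz : (y, z) ∈ I) :
    (x, z) ∈ I := by
  obtain ⟨w, hzw, hxw⟩ := mem_closure_iff.mp hxy _ (isOpen_chronPast hI z) hyz
  exact htrans x w z hxw hzw

end Chronology

theorem chron_ideal_general {M : Type*} [TopologicalSpace M] (I : Set (M × M))
    (hIopen : IsOpen I)
    (hItrans : ∀ x y z : M, (x, y) ∈ I → (y, z) ∈ I → (x, z) ∈ I) :
    I ⊆ Dpast I ∧
    (∀ x y z : M, (x, y) ∈ I → (y, z) ∈ Dpast I → (x, z) ∈ I) ∧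
    I ⊆ Dfut I ∧
    (∀ x y z : M, (x, y) ∈ Dfut I → (y, z) ∈ I → (x, z) ∈ I) ∧
    I ⊆ Dplus I ∧
    (∀ x y z : M, (x, y) ∈ I → (y, z) ∈ Dplus I → (x, z) ∈ I) ∧
    (∀ x y z : M, (x, y) ∈ Dplus I → (y, z) ∈ I → (x, z) ∈ I) :=
  ⟨subset_Dpast,
    fun _ _ _ hxy hyz => mem_of_mem_of_mem_Dpast hIopen hItrans hxy hyz,
    subset_Dfut,
    fun _ _ _ hxy hyz => mem_of_mem_Dfut_of_mem hIopen hItrans hxy hyz,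
    subset_Dplus,
    fun _ _ _ hxy hyz => mem_of_mem_of_mem_Dpast hIopen hItrans hxy hyz.2,
    fun _ _ _ hxy hyz => mem_of_mem_Dfut_of_mem hIopen hItrans hxy.1 hyz⟩

/-- `I` is a left `D⁺_p`-ideal and a right `D⁺_f`-ideal,
hence a `D⁺`-ideal. -/
theorem chron_ideal {M : Type*} [TopologicalSpace M] (I : Set (M × M))
    (hIopen : IsOpen I)
    (hItrans : ∀ x y z : M, (x, y) ∈ I → (y, z) ∈ I → (x, z) ∈ I)
    (hselfF : ∀ x : M, x ∈ closure (chronFuture I x))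
    (hselfP : ∀ x : M, x ∈ closure (chronPast I x)) :
    I ⊆ Dpast I ∧
    (∀ x y z : M, (x, y) ∈ I → (y, z) ∈ Dpast I → (x, z) ∈ I) ∧
    I ⊆ Dfut I ∧
    (∀ x y z : M, (x, y) ∈ Dfut I → (y, z) ∈ I → (x, z) ∈ I) ∧
    I ⊆ Dplus I ∧
    (∀ x y z : M, (x, y) ∈ I → (y, z) ∈ Dplus I → (x, z) ∈ I) ∧
    (∀ x y z : M, (x, y) ∈ Dplus I → (y, z) ∈ I → (x, z) ∈ I) :=
  chron_ideal_general I hIopen hItrans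
end

section
/- If the space is weakly distinguishing, then it is feebly distinguishing; that is, if D⁺ is antisymmetric, then for all x, y ∈ M, (x,y) ∈ J and (y,x) ∈ D⁺ imply x = y. -/
open Set Topology

/-! Push-up makes `J` monotone on chronological futures and pasts; since every point lies in
the closure of its own future and past, this puts `J` inside `D⁺`, and antisymmetry of `D⁺`
then gives the claim. -/

section PushUp

variable {M : Type*} {I J : Set (M × M)} {x y : M}

lemma chronFuture_subset_of_mem (hPushDown : ∀ x y z : M, (x, y) ∈ J → (y, z) ∈ I → (x, z) ∈ I)
    (hxy : (x, y) ∈ J) : chronFuture I y ⊆ chronFuture I x :=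
  fun z hz => hPushDown x y z hxy hz

lemma chronPast_subset_of_mem (hPushUp : ∀ x y z : M, (x, y) ∈ I → (y, z) ∈ J → (x, z) ∈ I)
    (hxy : (x, y) ∈ J) : chronPast I x ⊆ chronPast I y :=
  fun w hw => hPushUp w x y hw hxy

variable [TopologicalSpace M]

lemma mem_Dfut_of_mem (hselfF : ∀ x : M, x ∈ closure (chronFuture I x))
    (hPushDown : ∀ x y z : M, (x, y) ∈ J → (y, z) ∈ I → (x, z) ∈ I)
    (hxy : (x, y) ∈ J) : (x, y) ∈ Dfut I :=
  closure_mono (chronFuture_subset_of_mem hPushDown hxy) (hselfF y)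

lemma mem_Dpast_of_mem (hselfP : ∀ x : M, x ∈ closure (chronPast I x))
    (hPushUp : ∀ x y z : M, (x, y) ∈ I → (y, z) ∈ J → (x, z) ∈ I)
    (hxy : (x, y) ∈ J) : (x, y) ∈ Dpast I :=
  closure_mono (chronPast_subset_of_mem hPushUp hxy) (hselfP x)

lemma subset_Dplus_s15 (hselfF : ∀ x : M, x ∈ closure (chronFuture I x))
    (hselfP : ∀ x : M, x ∈ closure (chronPast I x))
    (hPushUp : ∀ x y z : M, (x, y) ∈ I → (y, z) ∈ J → (x, z) ∈ I)
    (hPushDown : ∀ x y z : M, (x, y) ∈ J → (y, z) ∈ I → (x, z) ∈ I) : J ⊆ Dplus I :=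
  fun _ hxy => ⟨mem_Dfut_of_mem hselfF hPushDown hxy, mem_Dpast_of_mem hselfP hPushUp hxy⟩

end PushUp

theorem feebly_dist_of_weakly_dist_general {M : Type*} [TopologicalSpace M] (I J : Set (M × M))
    (hselfF : ∀ x : M, x ∈ closure (chronFuture I x))
    (hselfP : ∀ x : M, x ∈ closure (chronPast I x))
    (hPushUp : ∀ x y z : M, (x, y) ∈ I → (y, z) ∈ J → (x, z) ∈ I)
    (hPushDown : ∀ x y z : M, (x, y) ∈ J → (y, z) ∈ I → (x, z) ∈ I)
    (hWeak : ∀ x y : M, (x, y) ∈ Dplus I → (y, x) ∈ Dplus I → x = y) :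
    ∀ x y : M, (x, y) ∈ J → (y, x) ∈ Dplus I → x = y :=
  fun x y hxy hyx => hWeak x y (subset_Dplus_s15 hselfF hselfP hPushUp hPushDown hxy) hyx

/-- weak distinction implies feeble distinction. -/
theorem feebly_dist_of_weakly_dist {M : Type*} [TopologicalSpace M] (I J : Set (M × M))
    (hIopen : IsOpen I)
    (hItrans : ∀ x y z : M, (x, y) ∈ I → (y, z) ∈ I → (x, z) ∈ I)
    (hselfF : ∀ x : M, x ∈ closure (chronFuture I x))
    (hselfP : ∀ x : M, x ∈ closure (chronPast I x))
    (hJrefl : ∀ x : M, (x, x) ∈ J)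
    (hJtrans : ∀ x y z : M, (x, y) ∈ J → (y, z) ∈ J → (x, z) ∈ J)
    (hIJ : I ⊆ J)
    (hPushUp : ∀ x y z : M, (x, y) ∈ I → (y, z) ∈ J → (x, z) ∈ I)
    (hPushDown : ∀ x y z : M, (x, y) ∈ J → (y, z) ∈ I → (x, z) ∈ I)
    (hWeak : ∀ x y : M, (x, y) ∈ Dplus I → (y, x) ∈ Dplus I → x = y) :
    ∀ x y : M, (x, y) ∈ J → (y, x) ∈ Dplus I → x = y :=
  feebly_dist_of_weakly_dist_general I J hselfF hselfP hPushUp hPushDown hWeak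
end

section
/- If the space is future reflecting (D⁺_f = A⁺) then D⁺ = D⁺_p; symmetrically, if the space is past reflecting (D⁺_p = A⁺) then D⁺ = D⁺_f (first part of Theorem 2 of the paper). -/
open Set Topology

/-- `A⁺ = cl(J)`, the closure of the causal relation in `M × M`. -/
def Aplus {M : Type*} [TopologicalSpace M] (J : Set (M × M)) : Set (M × M) :=
  closure J

section

variable {M : Type*} [TopologicalSpace M] {I J : Set (M × M)}

theorem Dfut_subset_closure : Dfut I ⊆ closure I := by
  rintro ⟨x, y⟩ hy
  exact map_mem_closure (f := (x, ·)) (continuous_const.prodMk continuous_id) hy fun _ h => h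

theorem Dpast_subset_closure : Dpast I ⊆ closure I := by
  rintro ⟨x, y⟩ hx
  exact map_mem_closure (f := (·, y)) (continuous_id.prodMk continuous_const) hx fun _ h => h

theorem Dfut_subset_Aplus (hIJ : I ⊆ J) : Dfut I ⊆ Aplus J :=
  Dfut_subset_closure.trans (closure_mono hIJ)

theorem Dpast_subset_Aplus (hIJ : I ⊆ J) : Dpast I ⊆ Aplus J :=
  Dpast_subset_closure.trans (closure_mono hIJ)

theorem Dplus_eq_Dpast_of_subset (h : Dpast I ⊆ Dfut I) : Dplus I = Dpast I :=
  inter_eq_right.mpr h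

theorem Dplus_eq_Dfut_of_subset (h : Dfut I ⊆ Dpast I) : Dplus I = Dfut I :=
  inter_eq_left.mpr h

end

theorem dplus_eq_of_reflecting_general {M : Type*} [TopologicalSpace M] (I J : Set (M × M))
    (hIJ : I ⊆ J) :
    (Dfut I = Aplus J → Dplus I = Dpast I) ∧
    (Dpast I = Aplus J → Dplus I = Dfut I) :=
  ⟨fun hF => Dplus_eq_Dpast_of_subset (hF ▸ Dpast_subset_Aplus hIJ),
    fun hP => Dplus_eq_Dfut_of_subset (hP ▸ Dfut_subset_Aplus hIJ)⟩

/-- future reflectivity gives `D⁺ = D⁺_p`; past reflectivity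
gives `D⁺ = D⁺_f`. -/
theorem dplus_eq_of_reflecting {M : Type*} [TopologicalSpace M] (I J : Set (M × M))
    (hIopen : IsOpen I)
    (hItrans : ∀ x y z : M, (x, y) ∈ I → (y, z) ∈ I → (x, z) ∈ I)
    (hselfF : ∀ x : M, x ∈ closure (chronFuture I x))
    (hselfP : ∀ x : M, x ∈ closure (chronPast I x))
    (hJrefl : ∀ x : M, (x, x) ∈ J)
    (hJtrans : ∀ x y z : M, (x, y) ∈ J → (y, z) ∈ J → (x, z) ∈ J)
    (hIJ : I ⊆ J)
    (hPushUp : ∀ x y z : M, (x, y) ∈ I → (y, z) ∈ J → (x, z) ∈ I)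
    (hPushDown : ∀ x y z : M, (x, y) ∈ J → (y, z) ∈ I → (x, z) ∈ I) :
    (Dfut I = Aplus J → Dplus I = Dpast I) ∧
    (Dpast I = Aplus J → Dplus I = Dfut I) :=
  dplus_eq_of_reflecting_general I J hIJ
end

section
/- If the space is feebly distinguishing and future reflecting (D⁺_f = A⁺), then any two causally related points with the same chronological past coincide: for all x, y ∈ M, (x,y) ∈ J and I⁻(x) = I⁻(y) imply x = y. Symmetrically, if the space is feebly distinguishing and past reflecting (D⁺_p = A⁺), then any two causally related points with the same chronological future coincide: (x,y) ∈ J and I⁺(x) = I⁺(y) imply x = y. (In a spacetime these conclusions are equivalent to past and future distinction respectively; this is the second part of Theorem 2 of the paper.) -/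
open Set Topology

/-!
Both `D⁺_f` and `D⁺_p` lie in `cl I ⊆ A⁺`, so future reflectivity forces `D⁺_p ⊆ D⁺_f`, i.e.
`D⁺ = D⁺_p`. If `I⁻(x) = I⁻(y)` then `y ∈ cl I⁻(y) = cl I⁻(x)`, so `(y, x) ∈ D⁺_p = D⁺`, and
feeble distinction gives `x = y`. The past case is dual.
-/

section Relations

variable {M : Type*} [TopologicalSpace M] {I J : Set (M × M)}

theorem Dplus_eq_Dfut_of_Dpast_eq_Aplus (hIJ : I ⊆ J) (h : Dpast I = Aplus J) :
    Dplus I = Dfut I :=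
  inter_eq_left.2 <| h ▸ Dfut_subset_closure.trans (closure_mono hIJ)

theorem Dplus_eq_Dpast_of_Dfut_eq_Aplus (hIJ : I ⊆ J) (h : Dfut I = Aplus J) :
    Dplus I = Dpast I :=
  inter_eq_right.2 <| h ▸ Dpast_subset_closure.trans (closure_mono hIJ)

theorem mem_Dfut_of_chronFuture_eq (hselfF : ∀ x : M, x ∈ closure (chronFuture I x)) {x y : M}
    (h : chronFuture I x = chronFuture I y) : (y, x) ∈ Dfut I :=
  show x ∈ closure (chronFuture I y) from h ▸ hselfF x

theorem mem_Dpast_of_chronPast_eq (hselfP : ∀ x : M, x ∈ closure (chronPast I x)) {x y : M}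
    (h : chronPast I x = chronPast I y) : (y, x) ∈ Dpast I :=
  show y ∈ closure (chronPast I x) from h ▸ hselfP y

end Relations

theorem dist_of_feeble_and_reflecting_general {M : Type*} [TopologicalSpace M] (I J : Set (M × M))
    (hselfF : ∀ x : M, x ∈ closure (chronFuture I x))
    (hselfP : ∀ x : M, x ∈ closure (chronPast I x))
    (hIJ : I ⊆ J)
    (hFeeble : ∀ x y : M, (x, y) ∈ J → (y, x) ∈ Dplus I → x = y) :
    (Dfut I = Aplus J →
      ∀ x y : M, (x, y) ∈ J → chronPast I x = chronPast I y → x = y) ∧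
    (Dpast I = Aplus J →
      ∀ x y : M, (x, y) ∈ J → chronFuture I x = chronFuture I y → x = y) := by
  refine ⟨fun hFR x y hxy hPast => ?_, fun hPR x y hxy hFut => ?_⟩
  · rw [Dplus_eq_Dpast_of_Dfut_eq_Aplus hIJ hFR] at hFeeble
    exact hFeeble x y hxy (mem_Dpast_of_chronPast_eq hselfP hPast)
  · rw [Dplus_eq_Dfut_of_Dpast_eq_Aplus hIJ hPR] at hFeeble
    exact hFeeble x y hxy (mem_Dfut_of_chronFuture_eq hselfF hFut)

/-- feeble distinction plus future (past) reflectivity implies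
past (resp. future) distinction along causally related pairs. -/
theorem dist_of_feeble_and_reflecting {M : Type*} [TopologicalSpace M] (I J : Set (M × M))
    (hIopen : IsOpen I)
    (hItrans : ∀ x y z : M, (x, y) ∈ I → (y, z) ∈ I → (x, z) ∈ I)
    (hselfF : ∀ x : M, x ∈ closure (chronFuture I x))
    (hselfP : ∀ x : M, x ∈ closure (chronPast I x))
    (hJrefl : ∀ x : M, (x, x) ∈ J)
    (hJtrans : ∀ x y z : M, (x, y) ∈ J → (y, z) ∈ J → (x, z) ∈ J)
    (hIJ : I ⊆ J)
    (hPushUp : ∀ x y z : M, (x, y) ∈ I → (y, z) ∈ J → (x, z) ∈ I)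
    (hPushDown : ∀ x y z : M, (x, y) ∈ J → (y, z) ∈ I → (x, z) ∈ I)
    (hFeeble : ∀ x y : M, (x, y) ∈ J → (y, x) ∈ Dplus I → x = y) :
    (Dfut I = Aplus J →
      ∀ x y : M, (x, y) ∈ J → chronPast I x = chronPast I y → x = y) ∧
    (Dpast I = Aplus J →
      ∀ x y : M, (x, y) ∈ J → chronFuture I x = chronFuture I y → x = y) :=
  dist_of_feeble_and_reflecting_general I J hselfF hselfP hIJ hFeeble
end
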